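/- arXiv:2207.01711 — 2 statements merged into one kernel-verified Lean document; each statement's English description precedes it below -/
import Mathlib

section
/- (Matrix form of Theorem 6.1.) Let Q(T) = det(D − A_ρ) ∈ ℤ_ℓ⟦T⟧. Then for every n ≥ 0 and every group homomorphism ψ: G(n) → K^×, setting t_ψ = (1 − ψ(ē_1), …, 1 − ψ(ē_d)) ∈ K^d, where ē_i ∈ G(n) is the image of the i-th standard basis vector of ℤ_ℓ^d (each coordinate satisfies |1 − ψ(ē_i)| < 1, so the evaluation converges), one has ev_{t_ψ}(Q) = det(D − A_ψ) = h_X(1, ψ). -/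
/-!
Because `‖tᵢ‖ < 1` and the coefficients are `ℓ`-adic integers, `ev_t` converges and is a ring
homomorphism `ℤ_ℓ⟦T⟧ → K`; it maps `𝔪 ^ M` into the ball of radius `r ^ M` for some `r < 1`, so
it is `𝔪`-adically continuous. Hence `a ↦ ev_t(ρ(a))` and `a ↦ ψ(a mod ℓⁿ)` are continuous
additive characters of `ℤ_ℓ^d` which agree on the basis vectors, since `ψ(ēᵢ) = 1 - tᵢ`; they
therefore agree on the dense subset `ℕ^d`, hence everywhere, and applying `ev_t` to
`det(D - A_ρ)` entrywise gives `det(D - A_ψ)`. The bound `‖1 - ψ(ēᵢ)‖ < 1` holds because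
`ψ(ēᵢ)` is an `ℓⁿ`-th root of unity and `‖ℓ‖ < 1`.
-/

/-- The maximal ideal `𝔪 = (ℓ, T₁, …, T_d)` of `ℤ_ℓ⟦T₁, …, T_d⟧`. -/
noncomputable def mIdeal (ℓ : ℕ) [Fact ℓ.Prime] (d : ℕ) :
    Ideal (MvPowerSeries (Fin d) ℤ_[ℓ]) :=
  Ideal.span ({(ℓ : MvPowerSeries (Fin d) ℤ_[ℓ])} ∪
    Set.range (MvPowerSeries.X : Fin d → MvPowerSeries (Fin d) ℤ_[ℓ]))

/-- Evaluation of a power series `Q = ∑_α c_α T^α ∈ ℤ_ℓ⟦T₁, …, T_d⟧` at a point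
`t ∈ K^d`: `ev_t(Q) = ∑_α c_α t^α`. -/
noncomputable def evalPS (ℓ : ℕ) [Fact ℓ.Prime] {K : Type*} [NormedField K]
    [Algebra ℚ_[ℓ] K] {d : ℕ} (t : Fin d → K)
    (Q : MvPowerSeries (Fin d) ℤ_[ℓ]) : K :=
  ∑' α : Fin d →₀ ℕ,
    algebraMap ℚ_[ℓ] K ((MvPowerSeries.coeff (R := ℤ_[ℓ]) α Q : ℚ_[ℓ])) * ∏ i, t i ^ α i

/-- The valency of the vertex `i` of the multigraph with oriented-edge set `S`,
origin map `eo` and terminus map `et` (each undirected edge appearing exactly once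
in `S`): `dᵢ = #{s : o(s) = i} + #{s : t(s) = i}` (so loops count twice). -/
def valency {g : ℕ} {S : Type*} [Fintype S] (eo et : S → Fin g) (i : Fin g) : ℕ :=
  (Finset.univ.filter fun s => eo s = i).card +
    (Finset.univ.filter fun s => et s = i).card

open Filter Topology

theorem norm_sub_one_lt_one_of_pow_eq_one {K : Type*} [NormedField K] [IsUltrametricDist K]
    {p : ℕ} (hp : p.Prime) (hpK : ‖(p : K)‖ < 1) {n : ℕ} {u : K} (hu : u ^ p ^ n = 1) :
    ‖u - 1‖ < 1 := by
  set x := u - 1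
  by_contra! hx
  obtain ⟨M, hM⟩ := Nat.exists_eq_add_one.2 (pow_pos hp.pos n)
  -- Binomial expansion of `(x + 1) ^ p ^ n = 1` writes `x ^ p ^ n` as lower powers of `x` times
  -- multiples of `p`, which is too small when `‖x‖ ≥ 1`.
  have hsum : x ^ (M + 1) = -∑ k ∈ Finset.range M, x ^ (k + 1) * ((M + 1).choose (k + 1) : K) := by
    have h := add_pow x 1 (p ^ n)
    rw [sub_add_cancel, hu, hM, Finset.sum_range_succ, Finset.sum_range_succ'] at h
    simp only [one_pow, mul_one, Nat.choose_self, Nat.cast_one, pow_zero, Nat.choose_zero_right]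
      at h
    linear_combination -h
  have hterm : ∀ k ∈ Finset.range M,
      ‖x ^ (k + 1) * ((M + 1).choose (k + 1) : K)‖ ≤ ‖(p : K)‖ * ‖x‖ ^ M := by
    intro k hk
    have hkM := Finset.mem_range.1 hk
    obtain ⟨c, hc⟩ := hp.dvd_choose_pow (k := k + 1) (n := n) (by omega) (by omega)
    rw [← hM, hc, norm_mul, norm_pow, Nat.cast_mul, norm_mul, mul_comm]
    gcongr
    · exact mul_le_of_le_one_right (norm_nonneg _) (IsUltrametricDist.norm_natCast_le_one K c)
    · omega
  have hle := IsUltrametricDist.norm_sum_le_of_forall_le_of_nonneg (by positivity) hterm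
  rw [← norm_neg, ← hsum, norm_pow] at hle
  have hxM : 0 < ‖x‖ ^ M := by positivity
  nlinarith [pow_succ ‖x‖ M]

theorem AddChar.norm_one_sub_lt_one {K ι : Type*} [NormedField K] [IsUltrametricDist K]
    {p n : ℕ} (hp : p.Prime) (hpK : ‖(p : K)‖ < 1) (ψ : AddChar (ι → ZMod (p ^ n)) Kˣ)
    (x : ι → ZMod (p ^ n)) : ‖1 - (ψ x : K)‖ < 1 := by
  have hx : p ^ n • x = 0 := by ext; simp
  have hroot : (ψ x : K) ^ p ^ n = 1 := by
    rw [← Units.val_pow_eq_pow_val, ← ψ.map_nsmul_eq_pow, hx, ψ.map_zero_eq_one, Units.val_one]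
  rw [norm_sub_rev]
  exact norm_sub_one_lt_one_of_pow_eq_one hp hpK hroot

theorem PadicInt.continuous_toZModPow {p : ℕ} [Fact p.Prime] (n : ℕ) :
    Continuous (PadicInt.toZModPow (p := p) n) := by
  refine continuous_iff_continuousAt.2 fun x => ?_
  rw [ContinuousAt, nhds_discrete (ZMod (p ^ n)), tendsto_pure]
  have hpos : (0 : ℝ) < (p : ℝ) ^ (-n : ℤ) :=
    zpow_pos (by exact_mod_cast (Fact.out : p.Prime).pos) _
  filter_upwards [Metric.closedBall_mem_nhds x hpos] with y hy
  rwa [Metric.mem_closedBall, dist_eq_norm, PadicInt.norm_le_pow_iff_mem_span_pow,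
    ← PadicInt.ker_toZModPow, RingHom.mem_ker, map_sub, sub_eq_zero] at hy

namespace AddChar

variable {A M : Type*}

def ofMapAddEqMul [AddMonoid A] [Group M] (f : A → M) (hf : ∀ a b, f (a + b) = f a * f b) :
    AddChar A M where
  toFun := f
  map_zero_eq_one' := by simpa using hf 0 0
  map_add_eq_mul' := hf

@[simp]
theorem ofMapAddEqMul_apply [AddMonoid A] [Group M] (f : A → M)
    (hf : ∀ a b, f (a + b) = f a * f b) (a : A) : ofMapAddEqMul f hf a = f a :=
  rfl

theorem map_sum_eq_prod [AddCommMonoid A] [CommMonoid M] (κ : AddChar A M) {ι : Type*}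
    (s : Finset ι) (f : ι → A) : κ (∑ i ∈ s, f i) = ∏ i ∈ s, κ (f i) :=
  map_prod κ.toMonoidHom (fun i => Multiplicative.ofAdd (f i)) s

theorem eq_of_eval_single_eq {ι : Type*} [Fintype ι] [DecidableEq ι] [TopologicalSpace A]
    [CommSemiring A] [CommMonoid M] [TopologicalSpace M] [T2Space M]
    (hdr : DenseRange ((↑) : ℕ → A)) {κ₁ κ₂ : AddChar (ι → A) M} (hκ₁ : Continuous κ₁)
    (hκ₂ : Continuous κ₂) (h : ∀ i, κ₁ (Pi.single i 1) = κ₂ (Pi.single i 1)) : κ₁ = κ₂ := by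
  refine DFunLike.coe_injective <|
    (DenseRange.piMap fun _ => hdr).equalizer hκ₁ hκ₂ (funext fun m => ?_)
  have hm : Pi.map (fun _ => ((↑) : ℕ → A)) m = ∑ i, m i • Pi.single i 1 := by
    ext k
    simp [Pi.single_apply]
  simp only [Function.comp_apply, hm, map_sum_eq_prod, map_nsmul_eq_pow, h]

end AddChar

section AdicContinuity

variable {R K : Type*} [CommRing R] [NormedRing K] [IsUltrametricDist K] (E : R →+* K)

theorem RingHom.norm_le_of_mem_span (hE : ∀ f, ‖E f‖ ≤ 1) {s : Set R} {r : ℝ} (hr : 0 ≤ r)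
    (hs : ∀ x ∈ s, ‖E x‖ ≤ r) {x : R} (hx : x ∈ Ideal.span s) : ‖E x‖ ≤ r := by
  induction hx using Submodule.span_induction with
  | mem x h => exact hs x h
  | zero => simpa using hr
  | add x y _ _ hx hy =>
    rw [map_add]
    exact (IsUltrametricDist.norm_add_le_max _ _).trans (max_le hx hy)
  | smul a x _ hx =>
    rw [smul_eq_mul, map_mul]
    exact (norm_mul_le _ _).trans (mul_le_of_le_one_left (norm_nonneg _) (hE a) |>.trans hx)

theorem RingHom.norm_le_pow_of_mem_pow (hE : ∀ f, ‖E f‖ ≤ 1) {I : Ideal R} {r : ℝ}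
    (hI : ∀ x ∈ I, ‖E x‖ ≤ r) (M : ℕ) {x : R} (hx : x ∈ I ^ M) : ‖E x‖ ≤ r ^ M := by
  induction M generalizing x with
  | zero => simpa using hE x
  | succ M ih =>
    rw [pow_succ] at hx
    refine Submodule.mul_induction_on hx (fun a ha b hb => ?_) fun a b ha hb => ?_
    · rw [map_mul, pow_succ]
      have hr : 0 ≤ r := by simpa using hI 0 I.zero_mem
      exact (norm_mul_le _ _).trans (mul_le_mul (ih ha) (hI b hb) (norm_nonneg _) (by positivity))
    · rw [map_add]
      exact (IsUltrametricDist.norm_add_le_max _ _).trans (max_le ha hb)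

theorem RingHom.continuous_adicTopology (hE : ∀ f, ‖E f‖ ≤ 1) {I : Ideal R} {r : ℝ} (hr : r < 1)
    (hI : ∀ x ∈ I, ‖E x‖ ≤ r) : @Continuous R K I.adicTopology _ E := by
  let _ := I.adicTopology
  refine continuous_iff_continuousAt.2 fun a => ?_
  rw [ContinuousAt, (I.hasBasis_nhds_adic a).tendsto_iff Metric.nhds_basis_ball]
  intro ε hε
  obtain ⟨M, hM⟩ := exists_pow_lt_of_lt_one hε hr
  refine ⟨M, trivial, ?_⟩
  rintro _ ⟨w, hw, rfl⟩
  rw [Metric.mem_ball, dist_eq_norm, map_add, add_sub_cancel_left]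
  exact (E.norm_le_pow_of_mem_pow hE hI M hw).trans_lt hM

end AdicContinuity

theorem norm_prod_pow_le {K ι : Type*} [NormedField K] [Fintype ι] {t : ι → K} {r : ℝ}
    (hr : ∀ i, ‖t i‖ ≤ r) (β : ι →₀ ℕ) : ‖∏ i, t i ^ β i‖ ≤ r ^ β.degree := by
  rw [norm_prod, Finsupp.degree_eq_sum, ← Finset.prod_pow_eq_pow_sum]
  exact Finset.prod_le_prod (fun i _ => norm_nonneg _) fun i _ => by
    rw [norm_pow]; exact pow_le_pow_left₀ (norm_nonneg _) (hr i) _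

theorem exists_forall_norm_le_lt_one {E ι : Type*} [SeminormedAddGroup E] [Fintype ι] {t : ι → E}
    (ht : ∀ i, ‖t i‖ < 1) : ∃ r, 0 ≤ r ∧ r < 1 ∧ ∀ i, ‖t i‖ ≤ r := by
  set r : NNReal := Finset.univ.sup fun i => ‖t i‖₊
  have hr1 : r < 1 := (Finset.sup_lt_iff zero_lt_one).2 fun i _ => ht i
  exact ⟨r, r.coe_nonneg, hr1, fun i => Finset.le_sup (f := fun i => ‖t i‖₊) (Finset.mem_univ i)⟩

theorem Finsupp.tendsto_degree_cofinite_atTop {σ : Type*} [Finite σ] :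
    Tendsto (Finsupp.degree : (σ →₀ ℕ) → ℕ) cofinite atTop :=
  tendsto_atTop.2 fun N => eventually_cofinite.2 <| by
    simpa only [not_le] using Finsupp.finite_of_degree_lt N

section Evaluation

variable {ℓ : ℕ} [Fact ℓ.Prime] {K : Type*} [NormedField K] [Algebra ℚ_[ℓ] K] {d : ℕ}
  {t : Fin d → K}

variable (ℓ t) in
noncomputable def evalPSTerm (Q : MvPowerSeries (Fin d) ℤ_[ℓ]) (β : Fin d →₀ ℕ) : K :=
  algebraMap ℚ_[ℓ] K ((MvPowerSeries.coeff (R := ℤ_[ℓ]) β Q : ℚ_[ℓ])) * ∏ i, t i ^ β i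

theorem norm_natCast_prime_lt_one (hext : ∀ x : ℚ_[ℓ], ‖algebraMap ℚ_[ℓ] K x‖ = ‖x‖) :
    ‖(ℓ : K)‖ < 1 := by
  rw [← map_natCast (algebraMap ℚ_[ℓ] K), hext, Padic.norm_p]
  exact inv_lt_one_of_one_lt₀ (mod_cast (Fact.out : ℓ.Prime).one_lt)

theorem evalPS_eq_tsum (Q : MvPowerSeries (Fin d) ℤ_[ℓ]) :
    evalPS ℓ t Q = ∑' β, evalPSTerm ℓ t Q β :=
  rfl

theorem norm_algebraMap_padicInt_le_one (hext : ∀ x : ℚ_[ℓ], ‖algebraMap ℚ_[ℓ] K x‖ = ‖x‖)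
    (c : ℤ_[ℓ]) : ‖algebraMap ℚ_[ℓ] K c‖ ≤ 1 := by
  rw [hext, PadicInt.padic_norm_e_of_padicInt]
  exact PadicInt.norm_le_one c

theorem norm_evalPSTerm_le (hext : ∀ x : ℚ_[ℓ], ‖algebraMap ℚ_[ℓ] K x‖ = ‖x‖) {r : ℝ}
    (hr : ∀ i, ‖t i‖ ≤ r) (Q : MvPowerSeries (Fin d) ℤ_[ℓ]) (β : Fin d →₀ ℕ) :
    ‖evalPSTerm ℓ t Q β‖ ≤ r ^ β.degree := by
  rw [evalPSTerm, norm_mul]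
  exact mul_le_of_le_one_left (norm_nonneg _) (norm_algebraMap_padicInt_le_one hext _)
    |>.trans (norm_prod_pow_le hr β)

theorem tendsto_evalPSTerm (hext : ∀ x : ℚ_[ℓ], ‖algebraMap ℚ_[ℓ] K x‖ = ‖x‖)
    (ht : ∀ i, ‖t i‖ < 1) (Q : MvPowerSeries (Fin d) ℤ_[ℓ]) :
    Tendsto (evalPSTerm ℓ t Q) cofinite (𝓝 0) := by
  obtain ⟨r, hr0, hr1, hr⟩ := exists_forall_norm_le_lt_one ht
  exact squeeze_zero_norm (norm_evalPSTerm_le hext hr Q)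
    ((tendsto_pow_atTop_nhds_zero_of_lt_one hr0 hr1).comp Finsupp.tendsto_degree_cofinite_atTop)

theorem evalPSTerm_mul (f g : MvPowerSeries (Fin d) ℤ_[ℓ]) (β : Fin d →₀ ℕ) :
    evalPSTerm ℓ t (f * g) β =
      ∑ p ∈ Finset.HasAntidiagonal.antidiagonal β, evalPSTerm ℓ t f p.1 * evalPSTerm ℓ t g p.2 := by
  simp only [evalPSTerm, MvPowerSeries.coeff_mul, PadicInt.coe_sum, PadicInt.coe_mul, map_sum,
    map_mul, Finset.sum_mul]
  refine Finset.sum_congr rfl fun p hp => ?_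
  rw [← Finset.HasAntidiagonal.mem_antidiagonal.1 hp]
  simp only [Finsupp.add_apply, pow_add, Finset.prod_mul_distrib]
  ring

theorem evalPS_monomial (β : Fin d →₀ ℕ) (c : ℤ_[ℓ]) :
    evalPS ℓ t (MvPowerSeries.monomial β c) = algebraMap ℚ_[ℓ] K c * ∏ i, t i ^ β i := by
  classical
  rw [evalPS_eq_tsum, tsum_eq_single β fun γ hγ => by
    simp [evalPSTerm, MvPowerSeries.coeff_monomial, hγ]]
  simp [evalPSTerm]

variable [IsUltrametricDist K] [CompleteSpace K]

theorem summable_evalPSTerm (hext : ∀ x : ℚ_[ℓ], ‖algebraMap ℚ_[ℓ] K x‖ = ‖x‖)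
    (ht : ∀ i, ‖t i‖ < 1) (Q : MvPowerSeries (Fin d) ℤ_[ℓ]) : Summable (evalPSTerm ℓ t Q) :=
  NonarchimedeanAddGroup.summable_of_tendsto_cofinite_zero (tendsto_evalPSTerm hext ht Q)

theorem evalPS_mul (hext : ∀ x : ℚ_[ℓ], ‖algebraMap ℚ_[ℓ] K x‖ = ‖x‖) (ht : ∀ i, ‖t i‖ < 1)
    (f g : MvPowerSeries (Fin d) ℤ_[ℓ]) :
    evalPS ℓ t (f * g) = evalPS ℓ t f * evalPS ℓ t g := by
  let _ : NonarchimedeanRing K := { is_nonarchimedean := NonarchimedeanAddGroup.is_nonarchimedean }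
  have hf := summable_evalPSTerm hext ht f
  have hg := summable_evalPSTerm hext ht g
  rw [evalPS_eq_tsum, evalPS_eq_tsum, evalPS_eq_tsum,
    hf.tsum_mul_tsum_eq_tsum_sum_antidiagonal hg (hf.mul_of_nonarchimedean hg)]
  exact tsum_congr (evalPSTerm_mul f g)

theorem evalPS_add (hext : ∀ x : ℚ_[ℓ], ‖algebraMap ℚ_[ℓ] K x‖ = ‖x‖) (ht : ∀ i, ‖t i‖ < 1)
    (f g : MvPowerSeries (Fin d) ℤ_[ℓ]) :
    evalPS ℓ t (f + g) = evalPS ℓ t f + evalPS ℓ t g := by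
  rw [evalPS_eq_tsum, evalPS_eq_tsum, evalPS_eq_tsum,
    ← (summable_evalPSTerm hext ht f).tsum_add (summable_evalPSTerm hext ht g)]
  simp only [evalPSTerm, map_add, PadicInt.coe_add, add_mul]

variable (t) in
noncomputable def evalPSRingHom (hext : ∀ x : ℚ_[ℓ], ‖algebraMap ℚ_[ℓ] K x‖ = ‖x‖)
    (ht : ∀ i, ‖t i‖ < 1) : MvPowerSeries (Fin d) ℤ_[ℓ] →+* K where
  toFun := evalPS ℓ t
  map_zero' := by simpa using evalPS_monomial (ℓ := ℓ) (t := t) 0 0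
  map_one' := by simpa using evalPS_monomial (ℓ := ℓ) (t := t) 0 1
  map_add' := evalPS_add hext ht
  map_mul' := evalPS_mul hext ht

variable (hext : ∀ x : ℚ_[ℓ], ‖algebraMap ℚ_[ℓ] K x‖ = ‖x‖) (ht : ∀ i, ‖t i‖ < 1)

theorem evalPSRingHom_apply (Q : MvPowerSeries (Fin d) ℤ_[ℓ]) :
    evalPSRingHom t hext ht Q = evalPS ℓ t Q :=
  rfl

theorem evalPSRingHom_X (i : Fin d) : evalPSRingHom t hext ht (MvPowerSeries.X i) = t i := by
  classical
  rw [evalPSRingHom_apply, MvPowerSeries.X_def, evalPS_monomial]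
  simp [Finsupp.single_apply]

theorem norm_evalPSRingHom_le_one (Q : MvPowerSeries (Fin d) ℤ_[ℓ]) :
    ‖evalPSRingHom t hext ht Q‖ ≤ 1 :=
  IsUltrametricDist.norm_tsum_le_of_forall_le_of_nonneg zero_le_one fun β =>
    (norm_evalPSTerm_le hext (fun i => (ht i).le) Q β).trans_eq (one_pow _)

theorem continuous_evalPSRingHom :
    @Continuous _ K (mIdeal ℓ d).adicTopology _ (evalPSRingHom t hext ht) := by
  obtain ⟨r, -, hr1, hr⟩ := exists_forall_norm_le_lt_one ht
  refine (evalPSRingHom t hext ht).continuous_adicTopology (norm_evalPSRingHom_le_one hext ht)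
    (max_lt (norm_natCast_prime_lt_one hext) hr1) fun x hx => ?_
  refine (evalPSRingHom t hext ht).norm_le_of_mem_span (norm_evalPSRingHom_le_one hext ht)
    (by positivity) ?_ hx
  rintro _ (h | ⟨i, rfl⟩)
  · rw [Set.mem_singleton_iff.1 h, map_natCast]
    exact le_max_left _ _
  · rw [evalPSRingHom_X]
    exact (hr i).trans (le_max_right _ _)

theorem evalPSRingHom_addChar_eq {κ : AddChar (Fin d → ℤ_[ℓ]) (MvPowerSeries (Fin d) ℤ_[ℓ])}
    (hκ : @Continuous _ _ _ (mIdeal ℓ d).adicTopology κ)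
    (hκX : ∀ i, κ (Pi.single i 1) = 1 - MvPowerSeries.X i) {χ : AddChar (Fin d → ℤ_[ℓ]) K}
    (hχ : Continuous χ) (hχt : ∀ i, χ (Pi.single i 1) = 1 - t i) (a : Fin d → ℤ_[ℓ]) :
    evalPSRingHom t hext ht (κ a) = χ a := by
  classical
  let _ := (mIdeal ℓ d).adicTopology
  have h := AddChar.eq_of_eval_single_eq PadicInt.denseRange_natCast
    (κ₁ := (evalPSRingHom t hext ht).toMonoidHom.compAddChar κ)
    ((continuous_evalPSRingHom hext ht).comp hκ) hχ fun i => by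
      simp [hκX, evalPSRingHom_X, hχt]
  exact DFunLike.congr_fun h a

end Evaluation

theorem stmt_6_general (ℓ : ℕ) [Fact ℓ.Prime]
    (K : Type*) [NormedField K] [CompleteSpace K] [IsUltrametricDist K]
    [Algebra ℚ_[ℓ] K]
    (hext : ∀ x : ℚ_[ℓ], ‖algebraMap ℚ_[ℓ] K x‖ = ‖x‖)
    (d : ℕ)
    (g : ℕ) (S : Type*) [Fintype S] (eo et : S → Fin g)
    (α : S → Fin d → ℤ_[ℓ])
    (ρ : (Fin d → ℤ_[ℓ]) → (MvPowerSeries (Fin d) ℤ_[ℓ])ˣ)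
    (hρhom : ∀ a b, ρ (a + b) = ρ a * ρ b)
    (hρcont : @Continuous (Fin d → ℤ_[ℓ]) (MvPowerSeries (Fin d) ℤ_[ℓ]) _
      ((mIdeal ℓ d).adicTopology) fun a => (ρ a : MvPowerSeries (Fin d) ℤ_[ℓ]))
    (hρX : ∀ i : Fin d, (ρ (Pi.single i 1) : MvPowerSeries (Fin d) ℤ_[ℓ])
      = 1 - MvPowerSeries.X i)
    -- `Q(T) = det(D - A_ρ)`:
    (Q : MvPowerSeries (Fin d) ℤ_[ℓ])
    (hQ : Q = Matrix.det
      (Matrix.diagonal (fun i => (valency eo et i : MvPowerSeries (Fin d) ℤ_[ℓ])) -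
        Matrix.of fun i j =>
          (∑ s ∈ Finset.univ.filter fun s => eo s = i ∧ et s = j,
              (ρ (α s) : MvPowerSeries (Fin d) ℤ_[ℓ])) +
          ∑ s ∈ Finset.univ.filter fun s => eo s = j ∧ et s = i,
              (ρ (-α s) : MvPowerSeries (Fin d) ℤ_[ℓ])))
    (n : ℕ) (ψ : (Fin d → ZMod (ℓ ^ n)) → Kˣ)
    (hψhom : ∀ x y, ψ (x + y) = ψ x * ψ y) :
    (∀ i : Fin d, ‖1 - (ψ (Pi.single i 1) : K)‖ < 1) ∧
    Summable (fun β : Fin d →₀ ℕ =>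
      algebraMap ℚ_[ℓ] K ((MvPowerSeries.coeff (R := ℤ_[ℓ]) β Q : ℚ_[ℓ])) *
        ∏ i, (1 - (ψ (Pi.single i 1) : K)) ^ β i) ∧
    evalPS ℓ (fun i => 1 - (ψ (Pi.single i 1) : K)) Q =
      Matrix.det
        (Matrix.diagonal (fun i => (valency eo et i : K)) -
          Matrix.of fun i j =>
            (∑ s ∈ Finset.univ.filter fun s => eo s = i ∧ et s = j,
                (ψ (fun k => PadicInt.toZModPow n (α s k)) : K)) +
            ∑ s ∈ Finset.univ.filter fun s => eo s = j ∧ et s = i,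
                ((ψ (fun k => PadicInt.toZModPow n (α s k)))⁻¹ : K)) := by
  classical
  set t : Fin d → K := fun i => 1 - (ψ (Pi.single i 1) : K)
  have ht : ∀ i, ‖t i‖ < 1 := fun i =>
    (AddChar.ofMapAddEqMul ψ hψhom).norm_one_sub_lt_one Fact.out (norm_natCast_prime_lt_one hext) _
  refine ⟨ht, summable_evalPSTerm hext ht Q, ?_⟩
  let κ := (Units.coeHom _).compAddChar (AddChar.ofMapAddEqMul ρ hρhom)
  let χ : AddChar (Fin d → ℤ_[ℓ]) K := (Units.coeHom K).compAddChar <|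
    AddChar.ofMapAddEqMul (fun a : Fin d → ℤ_[ℓ] => ψ fun k => PadicInt.toZModPow n (a k))
      fun a b => by
        rw [← hψhom]
        congr 1
        ext k
        simp
  have hχ : Continuous χ :=
    (continuous_of_discreteTopology (f := fun x => (ψ x : K))).comp <|
      continuous_pi fun k => (PadicInt.continuous_toZModPow n).comp (continuous_apply k)
  have hρψ : ∀ a, evalPSRingHom t hext ht (ρ a) = χ a :=
    evalPSRingHom_addChar_eq hext ht (κ := κ) hρcont hρX hχ fun i => by
      have hred : (fun k => PadicInt.toZModPow n ((Pi.single i 1 : Fin d → ℤ_[ℓ]) k)) =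
          Pi.single i 1 := by
        ext k
        by_cases h : k = i <;> simp [h]
      simp [χ, t, hred]
  rw [hQ, ← evalPSRingHom_apply hext ht, RingHom.map_det, RingHom.mapMatrix_apply]
  congr 1
  ext i j
  simp [Matrix.diagonal_apply, apply_ite, map_sum, hρψ, AddChar.map_neg_eq_inv, χ]

/-- matrix form of Theorem 6.1.  With `X` a finite multigraph on
vertices `v₁, …, v_g`, `α : S → ℤ_ℓ^d` a voltage assignment, `ρ` the `(ℓ,T)`-adic
character with `ρ(eᵢ) = 1 - Tᵢ`, and `Q(T) = det(D - A_ρ) ∈ ℤ_ℓ⟦T⟧`: for every `n ≥ 0`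
and every group homomorphism `ψ : G(n) = (ℤ/ℓ^n ℤ)^d → Kˣ`, setting
`t_ψ = (1 - ψ(ē₁), …, 1 - ψ(ē_d))`, each coordinate satisfies `‖1 - ψ(ēᵢ)‖ < 1`, the
evaluation converges, and `ev_{t_ψ}(Q) = det(D - A_ψ) = h_X(1, ψ)`. -/
theorem stmt_6 (ℓ : ℕ) [Fact ℓ.Prime]
    (K : Type*) [NormedField K] [CompleteSpace K] [IsUltrametricDist K]
    [Algebra ℚ_[ℓ] K]
    (hext : ∀ x : ℚ_[ℓ], ‖algebraMap ℚ_[ℓ] K x‖ = ‖x‖)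
    (d : ℕ) (hd : 0 < d)
    (g : ℕ) (S : Type*) [Fintype S] (eo et : S → Fin g)
    (α : S → Fin d → ℤ_[ℓ])
    (ρ : (Fin d → ℤ_[ℓ]) → (MvPowerSeries (Fin d) ℤ_[ℓ])ˣ)
    (hρhom : ∀ a b, ρ (a + b) = ρ a * ρ b)
    (hρcont : @Continuous (Fin d → ℤ_[ℓ]) (MvPowerSeries (Fin d) ℤ_[ℓ]) _
      ((mIdeal ℓ d).adicTopology) fun a => (ρ a : MvPowerSeries (Fin d) ℤ_[ℓ]))
    (hρX : ∀ i : Fin d, (ρ (Pi.single i 1) : MvPowerSeries (Fin d) ℤ_[ℓ])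
      = 1 - MvPowerSeries.X i)
    -- `Q(T) = det(D - A_ρ)`:
    (Q : MvPowerSeries (Fin d) ℤ_[ℓ])
    (hQ : Q = Matrix.det
      (Matrix.diagonal (fun i => (valency eo et i : MvPowerSeries (Fin d) ℤ_[ℓ])) -
        Matrix.of fun i j =>
          (∑ s ∈ Finset.univ.filter fun s => eo s = i ∧ et s = j,
              (ρ (α s) : MvPowerSeries (Fin d) ℤ_[ℓ])) +
          ∑ s ∈ Finset.univ.filter fun s => eo s = j ∧ et s = i,
              (ρ (-α s) : MvPowerSeries (Fin d) ℤ_[ℓ])))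
    (n : ℕ) (ψ : (Fin d → ZMod (ℓ ^ n)) → Kˣ)
    (hψhom : ∀ x y, ψ (x + y) = ψ x * ψ y) :
    (∀ i : Fin d, ‖1 - (ψ (Pi.single i 1) : K)‖ < 1) ∧
    Summable (fun β : Fin d →₀ ℕ =>
      algebraMap ℚ_[ℓ] K ((MvPowerSeries.coeff (R := ℤ_[ℓ]) β Q : ℚ_[ℓ])) *
        ∏ i, (1 - (ψ (Pi.single i 1) : K)) ^ β i) ∧
    evalPS ℓ (fun i => 1 - (ψ (Pi.single i 1) : K)) Q =
      Matrix.det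
        (Matrix.diagonal (fun i => (valency eo et i : K)) -
          Matrix.of fun i j =>
            (∑ s ∈ Finset.univ.filter fun s => eo s = i ∧ et s = j,
                (ψ (fun k => PadicInt.toZModPow n (α s k)) : K)) +
            ∑ s ∈ Finset.univ.filter fun s => eo s = j ∧ et s = i,
                ((ψ (fun k => PadicInt.toZModPow n (α s k)))⁻¹ : K)) :=
  stmt_6_general ℓ K hext d g S eo et α ρ hρhom hρcont hρX Q hQ n ψ hψhom
end

section
/- (Equation (2.9), matrix form.) Let G be a finite abelian group and β: S → G a voltage assignment. Assume X is connected, every valency d_i is at least 2, and χ(X) = g − |S| ≠ 0, and assume the derived multigraph Y = X(G, S, β) is connected. Let κ_Y be the determinant of the Laplacian of Y with the row and column indexed by (1, 0) deleted, and κ_X the determinant of the Laplacian D − A of X with the first row and column deleted (where A_{ij} = #{s: o(s)=i, t(s)=j} + #{s: o(s)=j, t(s)=i}). Then |G| · κ_Y = κ_X · ∏_{ψ ≠ 1} det(D − A_ψ), the product being over the nontrivial group homomorphisms ψ: G → ℂ^× and A_ψ the g×g matrix with (A_ψ)_{ij} = ∑_{s: o(s)=i, t(s)=j} ψ(β(s))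 + ∑_{s: o(s)=j, t(s)=i} ψ(β(s))^{−1}. -/
/-- Connectedness of the multigraph with vertex set `V`, edge set `E`, origin map `o`
and terminus map `t`: any two vertices are joined by a walk. -/
def IsConnectedMultigraph {V E : Type*} (o t : E → V) : Prop :=
  ∀ v w : V, Relation.ReflTransGen
    (fun a b => ∃ e, (o e = a ∧ t e = b) ∨ (o e = b ∧ t e = a)) v w

/-- The determinant of a square matrix with the row and the column indexed by `v₀`
deleted. -/
def deletedDet {V : Type*} [Fintype V] [DecidableEq V] (L : Matrix V V ℤ) (v₀ : V) : ℤ :=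
  Matrix.det (Matrix.of fun x y : {x : V // x ≠ v₀} => L x.1 y.1)

/-- The Laplacian (over `ℤ`) of the derived multigraph `X(G, S, β)`:
`L[(i,σ),(j,τ)] = dᵢ·δ_{(i,σ),(j,τ)} - #{s : o(s)=i, t(s)=j, τ = σ + β s}
 - #{s : o(s)=j, t(s)=i, τ = σ - β s}`. -/
def derivedLaplacian {g : ℕ} {S : Type*} [Fintype S] (eo et : S → Fin g)
    {G : Type*} [AddCommGroup G] [DecidableEq G] (β : S → G) :
    Matrix (Fin g × G) (Fin g × G) ℤ :=
  Matrix.of fun p q =>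
    (valency eo et p.1 : ℤ) * (if p = q then 1 else 0)
      - (Finset.univ.filter fun s => eo s = p.1 ∧ et s = q.1 ∧ q.2 = p.2 + β s).card
      - (Finset.univ.filter fun s => eo s = q.1 ∧ et s = p.1 ∧ q.2 = p.2 - β s).card

open Matrix Finset

theorem Finset.sum_card_filter_mul {S κ R : Type*} [Fintype κ] [DecidableEq κ] [CommSemiring R]
    (T : Finset S) (f : S → κ) (φ : κ → R) :
    ∑ k, (#{s ∈ T | f s = k} : R) * φ k = ∑ s ∈ T, φ (f s) := by
  rw [← sum_fiberwise T f fun s => φ (f s)]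
  refine sum_congr rfl fun k _ => ?_
  rw [sum_congr rfl fun s hs => by rw [(mem_filter.1 hs).2], sum_const, nsmul_eq_mul]

namespace Matrix

variable {V : Type*} [Fintype V] [DecidableEq V]

theorem det_eq_mul_det_submatrix_of_col_eq_zero {R : Type*} [CommRing R] (A : Matrix V V R)
    (v₀ : V) (hA : ∀ i ≠ v₀, A i v₀ = 0) :
    A.det = A v₀ v₀ * (A.submatrix (Subtype.val : {v // v ≠ v₀} → V) Subtype.val).det := by
  let e : {v // v = v₀} ⊕ {v // v ≠ v₀} ≃ V := Equiv.sumCompl (· = v₀)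
  let : Unique {v // v = v₀} := ⟨⟨⟨v₀, rfl⟩⟩, fun v => Subtype.ext v.2⟩
  have h₂₁ : (A.submatrix e e).toBlocks₂₁ = 0 := by
    ext i ⟨j, rfl⟩
    exact hA i i.2
  rw [← det_submatrix_equiv_self e, ← fromBlocks_toBlocks (A.submatrix e e), h₂₁,
    det_fromBlocks_zero₂₁, det_unique]
  rfl

theorem det_add_const_eq_mul_det_submatrix {K : Type*} [Field K] [CharZero K] (L : Matrix V V K)
    (hrow : ∀ i, ∑ j, L i j = 0) (hcol : ∀ j, ∑ i, L i j = 0) (v₀ : V) (x : K) :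
    (L + of fun _ _ => x).det =
      x * Fintype.card V ^ 2 * (L.submatrix (Subtype.val : {v // v ≠ v₀} → V) Subtype.val).det := by
  have : Nonempty V := ⟨v₀⟩
  set n : K := (Fintype.card V : K)
  have hn : n ≠ 0 := Nat.cast_ne_zero.2 Fintype.card_ne_zero
  set M := L + of fun _ _ => x
  have hMrow : ∀ i, ∑ j, M i j = n * x := fun i => by
    simp [M, sum_add_distrib, hrow, n]
  have hMcol : ∀ j, ∑ i, M i j = n * x := fun j => by
    simp [M, sum_add_distrib, hcol, n]
  -- All row and column sums of `M` are `n * x`: summing all rows into row `v₀` and then all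
  -- columns into column `v₀` makes both constant off the corner, and row `v₀` then clears
  -- column `v₀`.
  set M₁ := M.updateRow v₀ fun _ => n * x
  have h₁ : M₁.det = M.det := by
    have hsum : ∑ k, M k = fun _ => n * x := by
      funext j; exact (Finset.sum_apply j univ fun k => M k).trans (hMcol j)
    simpa only [one_smul, hsum] using det_updateRow_sum M v₀ fun _ => 1
  set M₂ := M₁.updateCol v₀ fun i => if i = v₀ then n * (n * x) else n * x
  have h₂ : M₂.det = M₁.det := by
    have hsum : (fun k => ∑ i, M₁ k i) = fun i => if i = v₀ then n * (n * x) else n * x := by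
      ext k
      by_cases hk : k = v₀ <;> simp [M₁, hk, hMrow, n]
    simpa only [smul_eq_mul, one_mul, hsum] using det_updateCol_sum M₁ v₀ fun _ => 1
  set M₃ : Matrix V V K := of fun i j => if i = v₀ then M₂ v₀ j else if j = v₀ then 0 else L i j
  have h₃ : M₂.det = M₃.det := by
    refine det_eq_of_forall_row_eq_smul_add_const (fun i => if i = v₀ then 0 else n⁻¹) v₀
      (by simp) fun i j => ?_
    by_cases hi : i = v₀ <;> by_cases hj : j = v₀ <;>
      simp [M₃, M₂, M₁, M, hi, hj, hn]
  have hminor : M₃.submatrix (Subtype.val : {v // v ≠ v₀} → V) (Subtype.val : {v // v ≠ v₀} → V)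
      = L.submatrix Subtype.val Subtype.val := by
    ext i j
    simp [M₃, i.2, j.2]
  rw [← h₁, ← h₂, h₃, det_eq_mul_det_submatrix_of_col_eq_zero M₃ v₀ fun i hi => by simp [M₃, hi],
    hminor]
  simp only [M₃, M₂, of_apply, if_true, updateCol_self]
  ring

end Matrix

theorem cast_deletedDet {R V : Type*} [CommRing R] [Fintype V] [DecidableEq V]
    (L : Matrix V V ℤ) (v₀ : V) :
    (deletedDet L v₀ : R) =
      ((L.map (Int.cast : ℤ → R)).submatrix (Subtype.val : {v // v ≠ v₀} → V) Subtype.val).det :=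
  (RingHom.map_det (Int.castRingHom R) _).trans rfl

section BlockCirculant

open scoped Kronecker

variable {ι G : Type*} [Fintype ι] [AddCommGroup G] [Fintype G]

theorem Matrix.sum_blockCirculant_row {R : Type*} [AddCommMonoid R] (f : ι → ι → G → R)
    (p : ι × G) : ∑ q : ι × G, f p.1 q.1 (q.2 - p.2) = ∑ j, ∑ τ, f p.1 j τ := by
  rw [Fintype.sum_prod_type]
  exact sum_congr rfl fun j _ => (Equiv.subRight p.2).sum_comp (f p.1 j)

theorem Matrix.sum_blockCirculant_col {R : Type*} [AddCommMonoid R] (f : ι → ι → G → R)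
    (q : ι × G) : ∑ p : ι × G, f p.1 q.1 (q.2 - p.2) = ∑ i, ∑ τ, f i q.1 τ := by
  rw [Fintype.sum_prod_type]
  exact sum_congr rfl fun i _ => (Equiv.subLeft q.2).sum_comp (f i q.1)

theorem Matrix.det_blockCirculant [DecidableEq ι] [DecidableEq G] (f : ι → ι → G → ℂ) :
    (of fun p q : ι × G => f p.1 q.1 (q.2 - p.2)).det =
      ∏ χ : AddChar G ℂ, (of fun i j => ∑ τ, f i j τ * χ τ).det := by
  obtain ⟨e⟩ : Nonempty (G ≃ AddChar G ℂ) := ⟨(Fintype.equivOfCardEq AddChar.card_eq).symm⟩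
  set M := of fun p q : ι × G => f p.1 q.1 (q.2 - p.2)
  set B := fun χ : AddChar G ℂ => of fun i j => ∑ τ, f i j τ * χ τ
  set U : Matrix (ι × G) (ι × G) ℂ := (1 : Matrix ι ι ℂ) ⊗ₖ of fun σ τ => e τ σ
  have hU : IsUnit U.det := by
    rw [det_kronecker, det_one, one_pow, one_mul]
    refine IsUnit.pow _ ?_
    rw [← isUnit_iff_isUnit_det, ← linearIndependent_cols_iff_isUnit]
    exact (AddChar.linearIndependent G ℂ).comp e e.injective
  let E : ι × G ≃ ι × AddChar G ℂ := Equiv.prodCongr (.refl ι) e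
  have hMU : M * U = U * (blockDiagonal B).submatrix E E := by
    ext ⟨i, σ⟩ ⟨j, τ⟩
    simp only [M, U, B, E, mul_apply, Fintype.sum_prod_type, kroneckerMap_apply, of_apply,
      one_apply, submatrix_apply, blockDiagonal_apply, Equiv.prodCongr_apply, Prod.map, Equiv.refl_apply]
    simp only [ite_mul, one_mul, zero_mul, mul_ite, mul_zero, sum_ite_irrel, sum_const_zero,
      sum_ite_eq', mem_univ, if_true, EmbeddingLike.apply_eq_iff_eq, sum_ite_eq]
    rw [← Equiv.sum_comp (Equiv.addRight σ), mul_sum]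
    refine sum_congr rfl fun x _ => ?_
    rw [Equiv.coe_addRight, add_sub_cancel_right, AddChar.map_add_eq_mul]
    ring
  have := congrArg det hMU
  rw [det_mul, det_mul, det_submatrix_equiv_self, det_blockDiagonal, mul_comm] at this
  exact mul_left_cancel₀ hU.ne_zero this

end BlockCirculant

section Multigraph

variable {g : ℕ} {S : Type*} [Fintype S] (eo et : S → Fin g)

def arcs (i j : Fin g) : Finset S := univ.filter fun s => eo s = i ∧ et s = j

def baseLaplacian : Matrix (Fin g) (Fin g) ℤ :=
  of fun i j => (valency eo et i : ℤ) * (if i = j then 1 else 0) -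
    ((#(arcs eo et i j) : ℤ) + #(arcs eo et j i))

theorem sum_card_arcs_left (i : Fin g) : ∑ j, #(arcs eo et i j) = #{s | eo s = i} := by
  simp_rw [arcs, ← filter_filter]
  exact (card_eq_sum_card_fiberwise fun _ _ => mem_coe.2 (mem_univ _)).symm

theorem sum_card_arcs_right (i : Fin g) : ∑ j, #(arcs eo et j i) = #{s | et s = i} := by
  simp_rw [arcs, and_comm (a := eo _ = _), ← filter_filter]
  exact (card_eq_sum_card_fiberwise fun _ _ => mem_coe.2 (mem_univ _)).symm

theorem baseLaplacian_sum_row (i : Fin g) : ∑ j, baseLaplacian eo et i j = 0 := by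
  simp only [baseLaplacian, of_apply, sum_sub_distrib, sum_add_distrib, mul_ite, mul_one, mul_zero,
    sum_ite_eq, mem_univ, if_true]
  rw [← Nat.cast_sum, ← Nat.cast_sum, sum_card_arcs_left, sum_card_arcs_right, valency]
  push_cast
  ring

theorem baseLaplacian_sum_col (j : Fin g) : ∑ i, baseLaplacian eo et i j = 0 := by
  simp only [baseLaplacian, of_apply, sum_sub_distrib, sum_add_distrib, mul_ite, mul_one, mul_zero,
    sum_ite_eq', mem_univ, if_true]
  rw [← Nat.cast_sum, ← Nat.cast_sum, sum_card_arcs_left, sum_card_arcs_right, valency]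
  push_cast
  ring

end Multigraph

section Derived

variable {g : ℕ} {S : Type*} [Fintype S] (eo et : S → Fin g) {G : Type*} (β : S → G)

noncomputable def twistedLaplacian (ψ : G → ℂ) : Matrix (Fin g) (Fin g) ℂ :=
  diagonal (fun i => (valency eo et i : ℂ)) -
    of fun i j => (∑ s ∈ arcs eo et i j, ψ (β s)) + ∑ s ∈ arcs eo et j i, (ψ (β s))⁻¹

theorem twistedLaplacian_one : twistedLaplacian eo et β 1 = (baseLaplacian eo et).map Int.cast := by
  ext i j
  by_cases h : i = j <;> simp [twistedLaplacian, baseLaplacian, h]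

variable [AddCommGroup G] [DecidableEq G]

def derivedKernel (i j : Fin g) (τ : G) : ℤ :=
  valency eo et i * (if i = j ∧ τ = 0 then 1 else 0) -
    #{s ∈ arcs eo et i j | β s = τ} - #{s ∈ arcs eo et j i | -β s = τ}

theorem derivedLaplacian_eq_blockCirculant :
    derivedLaplacian eo et β = of fun p q => derivedKernel eo et β p.1 q.1 (q.2 - p.2) := by
  ext ⟨i, σ⟩ ⟨j, τ⟩
  simp only [derivedLaplacian, derivedKernel, arcs, of_apply, filter_filter, Prod.mk.injEq,
    sub_eq_zero, and_assoc]
  have h₁ : ∀ s, β s = τ - σ ↔ τ = σ + β s := fun s => by rw [eq_sub_iff_add_eq', eq_comm]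
  have h₂ : ∀ s, -β s = τ - σ ↔ τ = σ - β s := fun s => by
    rw [eq_sub_iff_add_eq', ← sub_eq_add_neg, eq_comm]
  simp only [h₁, h₂, eq_comm (a := τ) (b := σ)]

variable [Fintype G]

theorem sum_derivedKernel_mul_addChar (χ : AddChar G ℂ) (i j : Fin g) :
    ∑ τ, (derivedKernel eo et β i j τ : ℂ) * χ τ = twistedLaplacian eo et β χ i j := by
  have hdiag : ∑ τ, (valency eo et i : ℂ) * (if i = j ∧ τ = 0 then 1 else 0) * χ τ =
      diagonal (fun i => (valency eo et i : ℂ)) i j := by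
    by_cases h : i = j <;> simp [h]
  simp only [derivedKernel, twistedLaplacian, Matrix.sub_apply, of_apply]
  push_cast
  simp only [sub_mul, sum_sub_distrib, sum_card_filter_mul, AddChar.map_neg_eq_inv, hdiag]
  ring

theorem sum_derivedKernel (i j : Fin g) :
    ∑ τ, (derivedKernel eo et β i j τ : ℂ) = baseLaplacian eo et i j := by
  simpa [twistedLaplacian_one] using sum_derivedKernel_mul_addChar eo et β 0 i j

theorem derivedLaplacian_sum_row (p : Fin g × G) :
    ∑ q, (derivedLaplacian eo et β).map (Int.cast : ℤ → ℂ) p q = 0 := by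
  simp only [derivedLaplacian_eq_blockCirculant, map_apply, of_apply,
    sum_blockCirculant_row fun i j τ => (derivedKernel eo et β i j τ : ℂ), sum_derivedKernel]
  exact_mod_cast baseLaplacian_sum_row eo et p.1

theorem derivedLaplacian_sum_col (q : Fin g × G) :
    ∑ p, (derivedLaplacian eo et β).map (Int.cast : ℤ → ℂ) p q = 0 := by
  simp only [derivedLaplacian_eq_blockCirculant, map_apply, of_apply,
    sum_blockCirculant_col fun i j τ => (derivedKernel eo et β i j τ : ℂ), sum_derivedKernel]
  exact_mod_cast baseLaplacian_sum_col eo et q.1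

-- The trivial character is `0 : AddChar G ℂ`.
theorem det_derivedLaplacian_add_one :
    ((derivedLaplacian eo et β).map (Int.cast : ℤ → ℂ) + of fun _ _ => 1).det =
      ((baseLaplacian eo et).map (Int.cast : ℤ → ℂ) + of fun _ _ => (Fintype.card G : ℂ)).det *
        ∏ χ ∈ univ.erase (0 : AddChar G ℂ), (twistedLaplacian eo et β χ).det := by
  have hcirc : (derivedLaplacian eo et β).map (Int.cast : ℤ → ℂ) + of (fun _ _ => 1) =
      of fun p q => (derivedKernel eo et β p.1 q.1 (q.2 - p.2) + 1 : ℂ) := by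
    rw [derivedLaplacian_eq_blockCirculant]
    rfl
  have hblock (χ : AddChar G ℂ) :
      (of fun i j => ∑ τ, ((derivedKernel eo et β i j τ : ℂ) + 1) * χ τ) =
        twistedLaplacian eo et β χ + of fun _ _ => if χ = 0 then (Fintype.card G : ℂ) else 0 := by
    ext i j
    simp only [add_mul, one_mul, sum_add_distrib, sum_derivedKernel_mul_addChar,
      AddChar.sum_eq_ite, of_apply, Matrix.add_apply]
  rw [hcirc, det_blockCirculant fun i j τ => (derivedKernel eo et β i j τ + 1 : ℂ),
    ← mul_prod_erase univ _ (mem_univ 0), hblock, if_pos rfl, AddChar.coe_zero,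
    twistedLaplacian_one]
  congr 1
  refine prod_congr rfl fun χ hχ => ?_
  rw [hblock, if_neg (ne_of_mem_erase hχ), show (of fun _ _ => (0 : ℂ)) = 0 from rfl, add_zero]

end Derived

section Characters

variable {G : Type*} [AddCommGroup G]

def addCharOfUnits (ψ : G → ℂˣ) (hψ : ∀ x y, ψ (x + y) = ψ x * ψ y) : AddChar G ℂ where
  toFun a := ψ a
  map_zero_eq_one' := by
    have h : ψ 0 = ψ 0 * ψ 0 := by simpa using hψ 0 0
    rw [left_eq_mul.1 h, Units.val_one]
  map_add_eq_mul' x y := by rw [hψ, Units.val_mul]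

theorem prod_erase_zero_addChar_eq_prod [Fintype G] {M : Type*} [CommMonoid M]
    (F : Finset (G → ℂˣ))
    (hF : ∀ ψ : G → ℂˣ, ψ ∈ F ↔ ((∀ x y, ψ (x + y) = ψ x * ψ y) ∧ ψ ≠ fun _ => 1))
    (Φ : (G → ℂ) → M) :
    ∏ χ ∈ univ.erase (0 : AddChar G ℂ), Φ χ = ∏ ψ ∈ F, Φ fun a => (ψ a : ℂ) := by
  refine prod_bij' (fun χ _ a => (χ.val_isUnit a).unit)
    (fun ψ hψ => addCharOfUnits ψ ((hF ψ).1 hψ).1) ?_ ?_ ?_ ?_ ?_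
  · intro χ hχ
    refine (hF _).2 ⟨fun x y => Units.ext (by simp [AddChar.map_add_eq_mul]),
      fun h => ne_of_mem_erase hχ ?_⟩
    ext a
    simpa using congrArg Units.val (congrFun h a)
  · intro ψ hψ
    refine mem_erase.2 ⟨fun h => ((hF ψ).1 hψ).2 ?_, mem_univ _⟩
    funext a
    exact Units.ext (by simpa [addCharOfUnits] using DFunLike.congr_fun h a)
  · intro χ _
    ext a
    rfl
  · intro ψ _
    funext a
    exact Units.ext rfl
  · intro χ _
    rfl

end Characters

theorem stmt_7_general (g : ℕ) (hg : 0 < g) (S : Type*) [Fintype S] (eo et : S → Fin g)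
    (G : Type*) [AddCommGroup G] [Fintype G] [DecidableEq G] (β : S → G)
    (F : Finset (G → ℂˣ))
    (hF : ∀ ψ : G → ℂˣ,
      ψ ∈ F ↔ ((∀ x y, ψ (x + y) = ψ x * ψ y) ∧ ψ ≠ fun _ => 1)) :
    (Fintype.card G : ℂ) *
        (deletedDet (derivedLaplacian eo et β) (⟨0, hg⟩, 0) : ℤ) =
      ((deletedDet
          (Matrix.of fun i j : Fin g =>
            (valency eo et i : ℤ) * (if i = j then 1 else 0) -
              (((Finset.univ.filter fun s => eo s = i ∧ et s = j).card : ℤ) +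
                (Finset.univ.filter fun s => eo s = j ∧ et s = i).card))
          ⟨0, hg⟩ : ℤ) : ℂ) *
        ∏ ψ ∈ F, Matrix.det
          (Matrix.diagonal (fun i => (valency eo et i : ℂ)) -
            Matrix.of fun i j =>
              (∑ s ∈ Finset.univ.filter fun s => eo s = i ∧ et s = j,
                  (ψ (β s) : ℂ)) +
              ∑ s ∈ Finset.univ.filter fun s => eo s = j ∧ et s = i,
                  ((ψ (β s))⁻¹ : ℂ)) := by
  have hY := det_add_const_eq_mul_det_submatrix _ (derivedLaplacian_sum_row eo et β)
    (derivedLaplacian_sum_col eo et β) (⟨0, hg⟩, 0) 1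
  have hX := det_add_const_eq_mul_det_submatrix ((baseLaplacian eo et).map (Int.cast : ℤ → ℂ))
    (fun i => by simp only [map_apply]; exact_mod_cast baseLaplacian_sum_row eo et i)
    (fun j => by simp only [map_apply]; exact_mod_cast baseLaplacian_sum_col eo et j) ⟨0, hg⟩
    (Fintype.card G : ℂ)
  rw [det_derivedLaplacian_add_one, hX, prod_erase_zero_addChar_eq_prod F hF fun ψ =>
    (twistedLaplacian eo et β ψ).det, Fintype.card_prod, Fintype.card_fin] at hY
  change _ = (deletedDet (baseLaplacian eo et) ⟨0, hg⟩ : ℂ) *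
    ∏ ψ ∈ F, (twistedLaplacian eo et β fun a => (ψ a : ℂ)).det
  rw [cast_deletedDet, cast_deletedDet]
  have hgG : (g : ℂ) ^ 2 * Fintype.card G ≠ 0 :=
    mul_ne_zero (pow_ne_zero _ (Nat.cast_ne_zero.2 hg.ne'))
      (Nat.cast_ne_zero.2 Fintype.card_ne_zero)
  apply mul_left_cancel₀ hgG
  push_cast at hY
  linear_combination -hY

/-- Equation (2.9), matrix form.  Let `G` be a finite abelian group
and `β : S → G` a voltage assignment on the connected multigraph `X` (all valencies
`≥ 2`, `χ(X) = g - |S| ≠ 0`), and assume the derived multigraph `Y = X(G, S, β)` is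
connected.  With `κ_Y`, `κ_X` the deleted-determinants of the respective Laplacians,
`|G| · κ_Y = κ_X · ∏_{ψ ≠ 1} det(D - A_ψ)`, the product over the nontrivial group
homomorphisms `ψ : G → ℂˣ` (gathered in the finset `F`). -/
theorem stmt_7 (g : ℕ) (hg : 0 < g) (S : Type*) [Fintype S] (eo et : S → Fin g)
    (G : Type*) [AddCommGroup G] [Fintype G] [DecidableEq G] (β : S → G)
    (hconnX : IsConnectedMultigraph eo et)
    (hval : ∀ i, 2 ≤ valency eo et i)
    (hchi : (g : ℤ) - Fintype.card S ≠ 0)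
    (hconnY : IsConnectedMultigraph
      (fun sσ : S × G => (eo sσ.1, sσ.2))
      (fun sσ : S × G => (et sσ.1, sσ.2 + β sσ.1)))
    (F : Finset (G → ℂˣ))
    (hF : ∀ ψ : G → ℂˣ,
      ψ ∈ F ↔ ((∀ x y, ψ (x + y) = ψ x * ψ y) ∧ ψ ≠ fun _ => 1)) :
    (Fintype.card G : ℂ) *
        (deletedDet (derivedLaplacian eo et β) (⟨0, hg⟩, 0) : ℤ) =
      ((deletedDet
          (Matrix.of fun i j : Fin g =>
            (valency eo et i : ℤ) * (if i = j then 1 else 0) -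
              (((Finset.univ.filter fun s => eo s = i ∧ et s = j).card : ℤ) +
                (Finset.univ.filter fun s => eo s = j ∧ et s = i).card))
          ⟨0, hg⟩ : ℤ) : ℂ) *
        ∏ ψ ∈ F, Matrix.det
          (Matrix.diagonal (fun i => (valency eo et i : ℂ)) -
            Matrix.of fun i j =>
              (∑ s ∈ Finset.univ.filter fun s => eo s = i ∧ et s = j,
                  (ψ (β s) : ℂ)) +
              ∑ s ∈ Finset.univ.filter fun s => eo s = j ∧ et s = i,
                  ((ψ (β s))⁻¹ : ℂ)) :=
  stmt_7_general g hg S eo et G β F hF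
end
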